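/- Let d be a positive even integer. If ε and δ are two finitely supported sequences both satisfying the Chung–Graham rule of expansion for even interval d and Σ_k ε_k · F_{2+d(k-1)} = Σ_k δ_k · F_{2+d(k-1)}, then ε = δ. -/

import Mathlib

/-!
Write `V k = F_{2+d(k-1)}` and `L = K_d`. For even `d` the Fibonacci–Lucas identity
`F_{x+2d} + F_x = L F_{x+d}` gives `V_{n+2} + V_n = L V_{n+1}`. The heart of the proof is that
admissible digits satisfy `∑_{k ≤ n} ε_k V_k < V_{n+1}`. A digit `≤ A - 1 = L - 2` at position
`n + 1` fits because `V_n ≤ V_{n+1}`; the top digit `A = L - 1` fits only if the lower part leaves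
room `V_n` below `V_{n+1}`. Going down from the top digit through a run of digits `A - 1`, each of
which preserves that room, rules (2) and (3) force us to meet either `ε_1 < B` or a digit
`≤ A - 2`, and both create it. Hence the value is strictly monotone for the order comparing the
highest differing digit, which gives uniqueness.
-/

/-- Lucas sequence: K 1 = 1, K 2 = 3, K (k+2) = K (k+1) + K k. -/
def lucas : ℕ → ℕ
  | 0 => 2
  | 1 => 1
  | n + 2 => lucas (n + 1) + lucas n

/-- The Chung–Graham rule of expansion for even interval `d`,
with `A = lucas d - 1` and `B = Nat.fib (2 + d) - 1`.
Sequences are indexed from 1 (so `ε 0 = 0`) and finitely supported. -/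
def CGRule (d : ℕ) (ε : ℕ → ℕ) : Prop :=
  ε 0 = 0 ∧
  {k | ε k ≠ 0}.Finite ∧
  ε 1 ≤ Nat.fib (2 + d) - 1 ∧
  (∀ k, 2 ≤ k → ε k ≤ lucas d - 1) ∧
  (∀ m, 2 ≤ m → ε m = lucas d - 1 →
    (∀ k, 2 ≤ k → k ≤ m - 1 → ε k = lucas d - 1 - 1) →
    ε 1 < Nat.fib (2 + d) - 1) ∧
  (∀ k j, 2 ≤ k → k < j → ε k = lucas d - 1 → ε j = lucas d - 1 →
    ∃ c, k < c ∧ c < j ∧ ε c ≤ lucas d - 1 - 2)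

/-- Lexicographic-from-the-right strict order on coefficient sequences. -/
def CGlt (ε τ : ℕ → ℕ) : Prop :=
  ∃ ℓ, ε ℓ < τ ℓ ∧ ∀ k, ℓ < k → ε k = τ k

theorem fib_add_two_mul_add_neg_one_pow_mul :
    ∀ d x : ℕ, (Nat.fib (x + 2 * d) : ℤ) + (-1) ^ d * Nat.fib x = lucas d * Nat.fib (x + d)
  | 0, x => by simp [lucas]; ring
  | 1, x => by simp [lucas, Nat.fib_add_two]
  | d + 2, x => by
    have h₁ := fib_add_two_mul_add_neg_one_pow_mul (d + 1) (x + 1)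
    have h₀ := fib_add_two_mul_add_neg_one_pow_mul d (x + 2)
    have hx : (Nat.fib (x + 2) : ℤ) = Nat.fib x + Nat.fib (x + 1) := mod_cast Nat.fib_add_two
    have hy : (Nat.fib (x + 2 * d + 4) : ℤ) = Nat.fib (x + 2 * d + 2) + Nat.fib (x + 2 * d + 3) :=
      mod_cast Nat.fib_add_two
    rw [lucas]
    push_cast
    ring_nf at *
    linear_combination h₁ + h₀ + hy - (-1) ^ d * hx

theorem fib_add_two_mul_add_fib_of_even {d : ℕ} (hd : Even d) (x : ℕ) :
    Nat.fib (x + 2 * d) + Nat.fib x = lucas d * Nat.fib (x + d) := by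
  have h := fib_add_two_mul_add_neg_one_pow_mul d x
  rw [hd.neg_one_pow, one_mul] at h
  exact_mod_cast h

theorem lucas_pos : ∀ n : ℕ, 0 < lucas n
  | 0 | 1 => by decide
  | n + 2 => Nat.add_pos_right _ (lucas_pos n)

theorem three_le_lucas : ∀ {n : ℕ}, 2 ≤ n → 3 ≤ lucas n
  | 2, _ => le_rfl
  | n + 3, _ => by
    have := lucas_pos (n + 1)
    have := three_le_lucas (n := n + 2) (by omega)
    show 3 ≤ lucas (n + 2) + lucas (n + 1)
    omega

/-- Weights `V k` (for `k ≥ 1`) of an expansion with digit bound `A = a + 2` and first digit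
bound `B`; the parameter `a` keeps `A - 1` and `A - 2` free of truncated subtraction. -/
structure CGBase (a B : ℕ) (V : ℕ → ℕ) : Prop where
  one : V 1 = 1
  mono : Monotone V
  add_two_add : ∀ n, 0 < n → V (n + 2) + V n = (a + 3) * V (n + 1)
  lt_two : B < V 2

structure CGDigits (a B : ℕ) (ε : ℕ → ℕ) : Prop where
  zero : ε 0 = 0
  one_le : ε 1 ≤ B
  le : ∀ k, 2 ≤ k → ε k ≤ a + 2
  one_lt : ∀ m, 2 ≤ m → ε m = a + 2 → (∀ k, 2 ≤ k → k < m → ε k = a + 1) → ε 1 < B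
  gap : ∀ k j, 2 ≤ k → k < j → ε k = a + 2 → ε j = a + 2 → ∃ c, k < c ∧ c < j ∧ ε c ≤ a

theorem cgBase_fib {d a : ℕ} (hd : Even d) (ha : lucas d = a + 3) :
    CGBase a (Nat.fib (2 + d) - 1) (fun k => Nat.fib (2 + d * (k - 1))) where
  one := by simp
  mono _ _ h := Nat.fib_mono (by gcongr)
  add_two_add n hn := by
    obtain ⟨m, rfl⟩ := Nat.exists_eq_succ_of_ne_zero hn.ne'
    simp only [Nat.succ_sub_one, show m + 1 + 2 - 1 = m + 2 by omega, ← ha]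
    convert fib_add_two_mul_add_fib_of_even hd (2 + d * m) using 3 <;> ring
  lt_two := by simp

theorem CGRule.cgDigits {d a : ℕ} {ε : ℕ → ℕ} (ha : lucas d = a + 3) (h : CGRule d ε) :
    CGDigits a (Nat.fib (2 + d) - 1) ε := by
  obtain ⟨h0, -, h1, hle, h1lt, hgap⟩ := h
  rw [ha] at hle h1lt hgap
  refine ⟨h0, h1, fun k hk => hle k hk, fun m hm hεm hmid => h1lt m hm hεm ?_,
    fun k j hk hkj hεk hεj => hgap k j hk hkj hεk hεj⟩
  intro k hk hkm
  simpa using hmid k hk (by omega)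

theorem eventually_finsum_eq_sum_range {M : Type*} [AddCommMonoid M] {f : ℕ → M}
    (hf : (Function.support f).Finite) :
    ∀ᶠ n in Filter.atTop, ∑ᶠ k, f k = ∑ k ∈ Finset.range n, f k := by
  obtain ⟨N, hN⟩ := hf.bddAbove
  filter_upwards [Filter.eventually_gt_atTop N] with n hn
  exact finsum_eq_sum_of_support_subset f fun k hk => by simpa using (hN hk).trans_lt hn

section Expansion

variable {a B : ℕ} {V ε : ℕ → ℕ}

theorem CGDigits.sum_range_add_lt (hV : CGBase a B V) (hε : CGDigits a B ε) {m t : ℕ}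
    (hm : 1 ≤ m) (hmt : m < t) (ht : ε t = a + 2) (hmid : ∀ i, m < i → i < t → ε i = a + 1)
    (hbound : ∀ k < m, ∑ i ∈ Finset.range (k + 1), ε i * V i < V (k + 1)) :
    ∑ i ∈ Finset.range (m + 1), ε i * V i + V m < V (m + 1) := by
  induction m, hm using Nat.le_induction with
  | base =>
    have := hε.one_lt t (by omega) ht fun k hk hkt => hmid k (by omega) hkt
    simp only [Finset.sum_range_succ, Finset.range_one, Finset.sum_singleton, hε.zero, zero_mul,
      hV.one, mul_one, zero_add]
    linarith [hV.lt_two]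
  | succ m hm ih =>
    rw [Finset.sum_range_succ]
    have hrec := hV.add_two_add m (by omega)
    rcases (hε.le (m + 1) (by omega)).lt_or_eq with hlt | htop
    · rcases Nat.lt_succ_iff_lt_or_eq.1 hlt with hlow | hmid'
      · have hS := hbound m (by omega)
        have := Nat.mul_le_mul_right (V (m + 1)) (Nat.lt_succ_iff.1 hlow)
        have := hV.mono (Nat.le_succ m)
        linarith
      · have hS := ih (by omega)
          (fun i hi hit => (Nat.lt_or_eq_of_le hi).elim (hmid i · hit) (· ▸ hmid'))
          (fun k hk => hbound k (by omega))
        rw [hmid']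
        linarith
    · obtain ⟨c, hc, hct, hεc⟩ := hε.gap (m + 1) t (by omega) hmt htop ht
      have := hmid c (by omega) hct
      omega

theorem CGDigits.sum_range_lt (hV : CGBase a B V) (hε : CGDigits a B ε) (n : ℕ) :
    ∑ k ∈ Finset.range (n + 1), ε k * V k < V (n + 1) := by
  induction n using Nat.strong_induction_on with
  | _ n ih =>
  rcases n with _ | _ | n
  · simp [hε.zero, hV.one]
  · simpa [Finset.sum_range_succ, hε.zero, hV.one] using hε.one_le.trans_lt hV.lt_two
  rw [Finset.sum_range_succ]
  have hrec := hV.add_two_add (n + 1) (by omega)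
  by_cases htop : ε (n + 2) = a + 2
  · have hS := hε.sum_range_add_lt hV (by omega) (lt_add_one _) htop (by omega)
      fun k hk => ih k (by omega)
    rw [htop]
    linarith
  · have hS := ih (n + 1) (by omega)
    have := Nat.mul_le_mul_right (V (n + 2)) (show ε (n + 2) ≤ a + 1 by
      have := hε.le (n + 2) (by omega); omega)
    have := hV.mono (Nat.le_succ (n + 1))
    linarith

theorem CGDigits.finsum_mul_lt_of_CGlt (hV : CGBase a B V) (hε : CGDigits a B ε) {τ : ℕ → ℕ}
    (hεfin : {k | ε k ≠ 0}.Finite) (hτfin : {k | τ k ≠ 0}.Finite) (hτ0 : τ 0 = 0)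
    (hlt : CGlt ε τ) : ∑ᶠ k, ε k * V k < ∑ᶠ k, τ k * V k := by
  obtain ⟨ℓ, hℓ, htail⟩ := hlt
  obtain ⟨n, rfl⟩ : ∃ n, ℓ = n + 1 :=
    Nat.exists_eq_succ_of_ne_zero (by rintro rfl; simp [hτ0] at hℓ)
  have hεV := eventually_finsum_eq_sum_range (hεfin.subset (Function.support_mul_subset_left ε V))
  have hτV := eventually_finsum_eq_sum_range (hτfin.subset (Function.support_mul_subset_left τ V))
  obtain ⟨N, hεN, hτN, hN⟩ := (hεV.and (hτV.and (Filter.eventually_ge_atTop (n + 2)))).exists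
  have htail_sum :
      ∑ k ∈ Finset.Ico (n + 2) N, ε k * V k = ∑ k ∈ Finset.Ico (n + 2) N, τ k * V k :=
    Finset.sum_congr rfl fun k hk => by rw [htail k (by simp at hk; omega)]
  rw [hεN, hτN, ← Finset.sum_range_add_sum_Ico _ hN, ← Finset.sum_range_add_sum_Ico _ hN,
    htail_sum]
  refine Nat.add_lt_add_right ?_ _
  rw [Finset.sum_range_succ, Finset.sum_range_succ _ (n + 1)]
  have hS := hε.sum_range_lt hV n
  have := Nat.mul_le_mul_right (V (n + 1)) hℓ
  rw [Nat.succ_mul] at this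
  omega

end Expansion

theorem CGlt_or_CGlt_of_ne {ε δ : ℕ → ℕ} (hε : {k | ε k ≠ 0}.Finite) (hδ : {k | δ k ≠ 0}.Finite)
    (hne : ε ≠ δ) : CGlt ε δ ∨ CGlt δ ε := by
  have hfin : {k | ε k ≠ δ k}.Finite :=
    (hε.union hδ).subset fun k hk => by by_contra h; simp_all
  obtain ⟨ℓ, hℓ, hmax⟩ := hfin.exists_maximal (Function.ne_iff.1 hne)
  have htail : ∀ k, ℓ < k → ε k = δ k := fun k hk => by
    by_contra h
    exact absurd (hmax h hk.le) (not_le.2 hk)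
  rcases Nat.lt_or_gt_of_ne hℓ with h | h
  · exact .inl ⟨ℓ, h, htail⟩
  · exact .inr ⟨ℓ, h, fun k hk => (htail k hk).symm⟩

theorem stmt_9 (d : ℕ) (hd : 0 < d) (hde : Even d) (ε δ : ℕ → ℕ)
    (hε : CGRule d ε) (hδ : CGRule d δ)
    (heq : ∑ᶠ k, ε k * Nat.fib (2 + d * (k - 1)) =
           ∑ᶠ k, δ k * Nat.fib (2 + d * (k - 1))) :
    ε = δ := by
  obtain ⟨a, ha⟩ : ∃ a, lucas d = a + 3 :=
    Nat.exists_eq_add_of_le' (three_le_lucas (by obtain ⟨r, rfl⟩ := hde; omega))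
  have hV := cgBase_fib hde ha
  have hlt {ε τ : ℕ → ℕ} (hε : CGRule d ε) (hτ : CGRule d τ) (h : CGlt ε τ) :
      ∑ᶠ k, ε k * Nat.fib (2 + d * (k - 1)) < ∑ᶠ k, τ k * Nat.fib (2 + d * (k - 1)) :=
    (hε.cgDigits ha).finsum_mul_lt_of_CGlt hV hε.2.1 hτ.2.1 hτ.1 h
  by_contra hne
  rcases CGlt_or_CGlt_of_ne hε.2.1 hδ.2.1 hne with h | h
  · exact (hlt hε hδ h).ne heq
  · exact (hlt hδ hε h).ne heq.symm
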